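/- For every ε ≥ 0 and every distribution p on V, the distribution T_{ε,0}(p) is (ε,0)-close to p. -/

import Mathlib

open Finset

/-- Prefix sum `s_k = p_1 + ⋯ + p_k` (0-indexed internally: sum of entries with index `< k`). -/
noncomputable def prefixSum (q : ℕ) (p : Fin q → ℝ) (k : ℕ) : ℝ :=
  ∑ i ∈ Finset.univ.filter (fun i : Fin q => (i : ℕ) < k), p i

/-- `p` is a probability distribution on `V = {1, …, q}`. -/
def IsDist (q : ℕ) (p : Fin q → ℝ) : Prop :=
  (∀ k, 0 ≤ p k) ∧ ∑ k, p k = 1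

/-- The modified prefix sums `s'_k` defining the operator `T_{ε,δ}`:
`s'_0 = 0` and `s'_k = min {1, min {e^ε s_k, 1 - e^{-ε} (1 - s_k)} + δ}` for `k ≥ 1`. -/
noncomputable def sPrime (ε δ : ℝ) (q : ℕ) (p : Fin q → ℝ) (k : ℕ) : ℝ :=
  if k = 0 then 0
  else min 1 (min (Real.exp ε * prefixSum q p k)
      (1 - Real.exp (-ε) * (1 - prefixSum q p k)) + δ)

/-- The operator `T_{ε,δ}`: `(T_{ε,δ} p)_k = s'_k - s'_{k-1}`. -/
noncomputable def Tmap (ε δ : ℝ) (q : ℕ) (p : Fin q → ℝ) : Fin q → ℝ :=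
  fun k => sPrime ε δ q p ((k : ℕ) + 1) - sPrime ε δ q p (k : ℕ)

/-- `P` and `Q` are `(ε,δ)`-close: for every `S ⊆ V`,
`P(S) ≤ e^ε Q(S) + δ` and `Q(S) ≤ e^ε P(S) + δ`. -/
def Close (ε δ : ℝ) (q : ℕ) (P Q : Fin q → ℝ) : Prop :=
  ∀ S : Finset (Fin q),
    (∑ k ∈ S, P k) ≤ Real.exp ε * (∑ k ∈ S, Q k) + δ ∧
    (∑ k ∈ S, Q k) ≤ Real.exp ε * (∑ k ∈ S, P k) + δ

/-- Dominance ordering: `x ⪯ y` iff every prefix sum of `x` is at most that of `y`. -/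
def Dom (q : ℕ) (x y : Fin q → ℝ) : Prop :=
  ∀ k : ℕ, k ≤ q → prefixSum q x k ≤ prefixSum q y k

/-!
For `δ = 0` and `s ∈ [0,1]` the cap at `1` is inactive, so `s'_k = f(s_k)` with
`f x = min (e^ε x) (1 - e^{-ε} (1 - x))`, a minimum of two affine maps of slopes `e^ε ≥ e^{-ε}`.
Every increment of `f` over `[x, x + h]` therefore lies between `e^{-ε} h` and `e^ε h`; applied
to `(T p)_k = f(s_k + p_k) - f(s_k)` this gives `e^{-ε} p_k ≤ (T p)_k ≤ e^ε p_k`, and summing over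
`S` gives both closeness inequalities.
-/

theorem min_sub_min_mem_Icc {α : Type*} [AddCommGroup α] [LinearOrder α]
    [IsOrderedAddMonoid α] {a b c d lo hi : α} (hac : a - c ∈ Set.Icc lo hi)
    (hbd : b - d ∈ Set.Icc lo hi) : min a b - min c d ∈ Set.Icc lo hi := by
  obtain ⟨hac₁, hac₂⟩ := hac
  obtain ⟨hbd₁, hbd₂⟩ := hbd
  constructor <;> grind

/-- For `δ = 0` the prefix sums of `T_{ε,0} p` are `envelope ε s_k`: the two bounds
`s' ≤ e^ε s` and `1 - s' ≥ e^{-ε} (1 - s)` made tight. -/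
noncomputable def envelope (ε x : ℝ) : ℝ :=
  min (Real.exp ε * x) (1 - Real.exp (-ε) * (1 - x))

theorem envelope_add_sub_mem_Icc {ε : ℝ} (hε : 0 ≤ ε) (x : ℝ) {h : ℝ} (hh : 0 ≤ h) :
    envelope ε (x + h) - envelope ε x ∈ Set.Icc (Real.exp (-ε) * h) (Real.exp ε * h) := by
  have hexp : Real.exp (-ε) ≤ Real.exp ε := Real.exp_le_exp.mpr (by linarith)
  apply min_sub_min_mem_Icc
  · constructor <;> nlinarith
  · constructor <;> nlinarith

section prefixSum

variable {q : ℕ} {p : Fin q → ℝ}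

theorem prefixSum_zero : prefixSum q p 0 = 0 := by
  simp [prefixSum]

theorem prefixSum_succ (k : Fin q) : prefixSum q p (k + 1) = prefixSum q p k + p k := by
  have hfilter : univ.filter (fun i : Fin q => (i : ℕ) < k + 1)
      = insert k (univ.filter (fun i : Fin q => (i : ℕ) < k)) := by
    ext i
    simp only [mem_filter, mem_univ, true_and, mem_insert, Fin.ext_iff]
    omega
  rw [prefixSum, hfilter, sum_insert (by simp), add_comm]
  rfl

theorem IsDist.prefixSum_nonneg (hp : IsDist q p) (k : ℕ) : 0 ≤ prefixSum q p k :=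
  sum_nonneg fun i _ => hp.1 i

theorem IsDist.prefixSum_le_one (hp : IsDist q p) (k : ℕ) : prefixSum q p k ≤ 1 :=
  hp.2 ▸ sum_le_sum_of_subset_of_nonneg (filter_subset _ _) fun i _ _ => hp.1 i

theorem IsDist.sPrime_zero_eq_envelope {ε : ℝ} (hε : 0 ≤ ε) (hp : IsDist q p) (k : ℕ) :
    sPrime ε 0 q p k = envelope ε (prefixSum q p k) := by
  have hexp : Real.exp (-ε) ≤ 1 := Real.exp_le_one_iff.mpr (by linarith)
  have hs₀ := hp.prefixSum_nonneg k
  have hs₁ := hp.prefixSum_le_one k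
  rcases eq_or_ne k 0 with rfl | hk
  · rw [sPrime, if_pos rfl, envelope, prefixSum_zero, mul_zero, min_eq_left (by linarith)]
  · rw [sPrime, if_neg hk, add_zero, envelope, min_eq_right]
    exact (min_le_right _ _).trans (by nlinarith [Real.exp_pos (-ε)])

theorem IsDist.Tmap_zero_mem_Icc {ε : ℝ} (hε : 0 ≤ ε) (hp : IsDist q p) (k : Fin q) :
    Tmap ε 0 q p k ∈ Set.Icc (Real.exp (-ε) * p k) (Real.exp ε * p k) := by
  rw [Tmap, hp.sPrime_zero_eq_envelope hε, hp.sPrime_zero_eq_envelope hε, prefixSum_succ]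
  exact envelope_add_sub_mem_Icc hε _ (hp.1 k)

end prefixSum

theorem Tmap_close_zero_general (q : ℕ) (ε : ℝ) (hε : 0 ≤ ε)
    (p : Fin q → ℝ) (hp : IsDist q p) :
    Close ε 0 q (Tmap ε 0 q p) p := by
  intro S
  rw [add_zero, add_zero, mul_sum, mul_sum]
  constructor
  · exact sum_le_sum fun k _ => (hp.Tmap_zero_mem_Icc hε k).2
  · refine sum_le_sum fun k _ => ?_
    have hlow := (hp.Tmap_zero_mem_Icc hε k).1
    calc p k = Real.exp ε * (Real.exp (-ε) * p k) := by
          rw [← mul_assoc, ← Real.exp_add, add_neg_cancel, Real.exp_zero, one_mul]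
      _ ≤ Real.exp ε * Tmap ε 0 q p k := by gcongr

/-- For ε ≥ 0 and any distribution `p`, `T_{ε,0}(p)` is `(ε,0)`-close to `p`. -/
theorem Tmap_close_zero (q : ℕ) (hq : 1 ≤ q) (ε : ℝ) (hε : 0 ≤ ε)
    (p : Fin q → ℝ) (hp : IsDist q p) :
    Close ε 0 q (Tmap ε 0 q p) p :=
  Tmap_close_zero_general q ε hε p hp
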